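/- If the Gårding cone Γ_k = {λ ∈ ℝⁿ : σ_i(λ) ≥ 0 for all 1 ≤ i ≤ k} is convex and u, v are positive C² functions on Ω whose matrices A(u), A(v) (defined by A_{ij}(w) = w w_{ij} − (1/2)|∇w|² δ_{ij}) have eigenvalue vectors in Γ_k at every point, then the eigenvalue vector of A(u+v) also lies in Γ_k at every point. -/

import Mathlib

open scoped BigOperators Classical
open MeasureTheory

noncomputable section

abbrev E (n : ℕ) := EuclideanSpace ℝ (Fin n)

/-- k-th elementary symmetric polynomial of a vector in ℝⁿ. -/
def esymm (n k : ℕ) (lam : Fin n → ℝ) : ℝ :=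
  ∑ s ∈ Finset.univ.powersetCard k, ∏ i ∈ s, lam i

/-- Eigenvalue vector of a real symmetric matrix (junk value 0 otherwise). -/
def eigs {n : ℕ} (M : Matrix (Fin n) (Fin n) ℝ) : Fin n → ℝ :=
  if h : M.IsHermitian then h.eigenvalues else 0

/-- σ_k of the eigenvalues of a symmetric matrix. -/
def Sk (n k : ℕ) (M : Matrix (Fin n) (Fin n) ℝ) : ℝ := esymm n k (eigs M)

/-- The (closed) Gårding cone Γ_k. -/
def GammaK (n k : ℕ) : Set (Fin n → ℝ) :=
  {lam | ∀ i, 1 ≤ i → i ≤ k → 0 ≤ esymm n i lam}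

/-- i-th partial derivative. -/
def pd {n : ℕ} (u : E n → ℝ) (i : Fin n) (x : E n) : ℝ :=
  fderiv ℝ u x (EuclideanSpace.single i 1)

/-- Hessian matrix. -/
def hess {n : ℕ} (u : E n → ℝ) (x : E n) : Matrix (Fin n) (Fin n) ℝ :=
  Matrix.of fun i j => pd (fun y => pd u j y) i x

/-- |∇u|². -/
def gradsq {n : ℕ} (u : E n → ℝ) (x : E n) : ℝ := ∑ i, (pd u i x) ^ 2

/-- The conformal Schouten-type matrix A_{ij}(u) = u u_{ij} - (1/2)|∇u|² δ_{ij}. -/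
def Amat {n : ℕ} (u : E n → ℝ) (x : E n) : Matrix (Fin n) (Fin n) ℝ :=
  Matrix.of fun i j => u x * hess u x i j - (1 / 2) * gradsq u x * (if i = j then 1 else 0)


/-!
A direct computation gives
`A(u + v) = ((u + v)/u) A(u) + ((u + v)/v) A(v) + (|v ∇u - u ∇v|² / (2uv)) I`,
a combination with nonnegative coefficients, and `Γ_k` is a permutation-invariant convex cone
containing the nonnegative constant vectors. If `β` is an eigenbasis of `P = aM + bN + cI`, then
`λ_i(P) = a ⟪β_i, M β_i⟫ + b ⟪β_i, N β_i⟫ + c`. The vector `(⟪β_i, M β_i⟫)_i` is `D λ(M)` for the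
doubly stochastic matrix `D_ij = ⟪β_i, e_j⟫²`, `e` an eigenbasis of `M`; by Birkhoff's theorem it
is a convex combination of permutations of `λ(M)`, hence lies in `Γ_k`.
-/

open scoped RealInnerProductSpace
open Matrix

section GardingCone

variable {n k : ℕ}

lemma esymm_eq_multiset_esymm (lam : Fin n → ℝ) :
    esymm n k lam = (Finset.univ.val.map lam).esymm k :=
  (Finset.esymm_map_val lam Finset.univ k).symm

lemma esymm_comp_perm (lam : Fin n → ℝ) (σ : Equiv.Perm (Fin n)) :
    esymm n k (lam ∘ σ) = esymm n k lam := by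
  rw [esymm_eq_multiset_esymm, esymm_eq_multiset_esymm, ← Multiset.map_map,
    Multiset.map_univ_val_equiv]

lemma esymm_smul (t : ℝ) (lam : Fin n → ℝ) : esymm n k (t • lam) = t ^ k * esymm n k lam := by
  rw [esymm, esymm, Finset.mul_sum]
  refine Finset.sum_congr rfl fun s hs => ?_
  rw [← (Finset.mem_powersetCard.1 hs).2, ← Finset.prod_const, ← Finset.prod_mul_distrib]
  rfl

lemma esymm_nonneg {lam : Fin n → ℝ} (h : 0 ≤ lam) : 0 ≤ esymm n k lam :=
  Finset.sum_nonneg fun _ _ => Finset.prod_nonneg fun i _ => h i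

lemma comp_perm_mem_GammaK {lam : Fin n → ℝ} (h : lam ∈ GammaK n k) (σ : Equiv.Perm (Fin n)) :
    lam ∘ σ ∈ GammaK n k := fun i h1 h2 => esymm_comp_perm lam σ ▸ h i h1 h2

lemma smul_mem_GammaK {t : ℝ} (ht : 0 ≤ t) {lam : Fin n → ℝ} (h : lam ∈ GammaK n k) :
    t • lam ∈ GammaK n k := fun i h1 h2 => by
  rw [esymm_smul]
  exact mul_nonneg (pow_nonneg ht i) (h i h1 h2)

lemma mem_GammaK_of_nonneg {lam : Fin n → ℝ} (h : 0 ≤ lam) : lam ∈ GammaK n k :=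
  fun _ _ _ => esymm_nonneg h

lemma add_mem_GammaK (hconv : Convex ℝ (GammaK n k)) {lam mu : Fin n → ℝ}
    (hlam : lam ∈ GammaK n k) (hmu : mu ∈ GammaK n k) : lam + mu ∈ GammaK n k := by
  have hmid := hconv hlam hmu (by norm_num : (0 : ℝ) ≤ 1 / 2) (by norm_num : (0 : ℝ) ≤ 1 / 2)
    (by norm_num)
  convert smul_mem_GammaK zero_le_two hmid using 1
  rw [smul_add, smul_smul, smul_smul]
  norm_num

end GardingCone

section Spectral

variable {ι : Type*} [Fintype ι] [DecidableEq ι] {A : Matrix ι ι ℝ}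

lemma Matrix.mulVec_mem_of_mem_doublyStochastic {S : Set (ι → ℝ)} (hS : Convex ℝ S)
    (hperm : ∀ σ : Equiv.Perm ι, ∀ x ∈ S, x ∘ σ ∈ S) {D : Matrix ι ι ℝ}
    (hD : D ∈ doublyStochastic ℝ ι) {x : ι → ℝ} (hx : x ∈ S) : D *ᵥ x ∈ S := by
  rw [← SetLike.mem_coe, doublyStochastic_eq_convexHull_permMatrix] at hD
  have hDx : D *ᵥ x ∈ convexHull ℝ
      ((mulVecBilin ℝ ℝ).flip x '' {σ.permMatrix ℝ | σ : Equiv.Perm ι}) := by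
    rw [← LinearMap.image_convexHull]
    exact ⟨D, hD, rfl⟩
  refine convexHull_min ?_ hS hDx
  rintro _ ⟨_, ⟨σ, rfl⟩, rfl⟩
  simpa [permMatrix_mulVec] using hperm σ x hx

lemma OrthonormalBasis.sq_inner_mem_doublyStochastic
    (b u : OrthonormalBasis ι ℝ (EuclideanSpace ℝ ι)) :
    (Matrix.of fun i j => ⟪b i, u j⟫ ^ 2) ∈ doublyStochastic ℝ ι := by
  rw [mem_doublyStochastic_iff_sum]
  refine ⟨fun i j => sq_nonneg _, fun i => ?_, fun j => ?_⟩
  · simp [u.sum_sq_inner_left, b.orthonormal.1 i]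
  · simp [b.sum_sq_inner_right, u.orthonormal.1 j]

lemma Matrix.IsHermitian.toEuclideanLin_eigenvectorBasis (hA : A.IsHermitian) (j : ι) :
    A.toEuclideanLin (hA.eigenvectorBasis j) = hA.eigenvalues j • hA.eigenvectorBasis j := by
  rw [toLpLin_apply, hA.mulVec_eigenvectorBasis]
  rfl

lemma Matrix.IsHermitian.eigenvalues_eq_inner (hA : A.IsHermitian) (j : ι) :
    hA.eigenvalues j = ⟪hA.eigenvectorBasis j, A.toEuclideanLin (hA.eigenvectorBasis j)⟫ := by
  rw [hA.toEuclideanLin_eigenvectorBasis, real_inner_smul_right, real_inner_self_eq_norm_sq,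
    hA.eigenvectorBasis.orthonormal.1 j, one_pow, mul_one]

lemma Matrix.IsHermitian.inner_toEuclideanLin_eq_mulVec_eigenvalues (hA : A.IsHermitian)
    (b : OrthonormalBasis ι ℝ (EuclideanSpace ℝ ι)) :
    (fun i => ⟪b i, A.toEuclideanLin (b i)⟫)
      = (Matrix.of fun i j => ⟪b i, hA.eigenvectorBasis j⟫ ^ 2) *ᵥ hA.eigenvalues := by
  funext i
  set u := hA.eigenvectorBasis
  calc ⟪b i, A.toEuclideanLin (b i)⟫
      = ∑ j, ⟪b i, u j⟫ * ⟪u j, A.toEuclideanLin (b i)⟫ := (u.sum_inner_mul_inner _ _).symm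
    _ = ∑ j, ⟪b i, u j⟫ ^ 2 * hA.eigenvalues j := by
        refine Finset.sum_congr rfl fun j _ => ?_
        rw [← isSymmetric_toEuclideanLin_iff.mpr hA, hA.toEuclideanLin_eigenvectorBasis,
          real_inner_smul_left, real_inner_comm]
        ring
    _ = _ := rfl

lemma Matrix.IsHermitian.inner_toEuclideanLin_mem {S : Set (ι → ℝ)} (hS : Convex ℝ S)
    (hperm : ∀ σ : Equiv.Perm ι, ∀ x ∈ S, x ∘ σ ∈ S) (hA : A.IsHermitian)
    (hmem : hA.eigenvalues ∈ S) (b : OrthonormalBasis ι ℝ (EuclideanSpace ℝ ι)) :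
    (fun i => ⟪b i, A.toEuclideanLin (b i)⟫) ∈ S := by
  rw [hA.inner_toEuclideanLin_eq_mulVec_eigenvalues]
  exact mulVec_mem_of_mem_doublyStochastic hS hperm
    (b.sq_inner_mem_doublyStochastic hA.eigenvectorBasis) hmem

end Spectral

lemma eigs_of_isHermitian {n : ℕ} {M : Matrix (Fin n) (Fin n) ℝ} (hM : M.IsHermitian) :
    eigs M = hM.eigenvalues :=
  dif_pos hM

lemma eigs_smul_add_smul_add_smul_one_mem_GammaK {n k : ℕ} (hconv : Convex ℝ (GammaK n k))
    {M N : Matrix (Fin n) (Fin n) ℝ} (hM : M.IsHermitian) (hN : N.IsHermitian)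
    (hMG : eigs M ∈ GammaK n k) (hNG : eigs N ∈ GammaK n k) {a b c : ℝ}
    (ha : 0 ≤ a) (hb : 0 ≤ b) (hc : 0 ≤ c) :
    eigs (a • M + b • N + c • 1) ∈ GammaK n k := by
  have hP : (a • M + b • N + c • 1).IsHermitian :=
    ((hM.smul (.all a)).add (hN.smul (.all b))).add (isHermitian_one.smul (.all c))
  set β := hP.eigenvectorBasis
  have hperm : ∀ σ : Equiv.Perm (Fin n), ∀ lam ∈ GammaK n k, lam ∘ σ ∈ GammaK n k :=
    fun σ _ h => comp_perm_mem_GammaK h σ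
  have hsplit : hP.eigenvalues = a • (fun i => ⟪β i, M.toEuclideanLin (β i)⟫)
      + b • (fun i => ⟪β i, N.toEuclideanLin (β i)⟫) + fun _ => c := by
    funext i
    simp [hP.eigenvalues_eq_inner, β, inner_add_right, real_inner_smul_right,
      hP.eigenvectorBasis.orthonormal.1 i]
  rw [eigs_of_isHermitian hP, hsplit]
  refine add_mem_GammaK hconv (add_mem_GammaK hconv ?_ ?_) (mem_GammaK_of_nonneg fun _ => hc)
  · exact smul_mem_GammaK ha <| hM.inner_toEuclideanLin_mem hconv hperm
      (eigs_of_isHermitian hM ▸ hMG) β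
  · exact smul_mem_GammaK hb <| hN.inner_toEuclideanLin_mem hconv hperm
      (eigs_of_isHermitian hN ▸ hNG) β

section Calculus

variable {n : ℕ} {u v : E n → ℝ} {x : E n}

lemma pd_differentiableAt (hu : ContDiffAt ℝ 2 u x) (j : Fin n) :
    DifferentiableAt ℝ (fun y => pd u j y) x :=
  ((hu.fderiv_right (m := 1) (by norm_num)).differentiableAt one_ne_zero).clm_apply
    (differentiableAt_const _)

lemma hess_apply_eq_fderiv_fderiv (hu : ContDiffAt ℝ 2 u x) (i j : Fin n) :
    hess u x i j = fderiv ℝ (fderiv ℝ u) x (EuclideanSpace.single i 1)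
      (EuclideanSpace.single j 1) := by
  have hd : DifferentiableAt ℝ (fderiv ℝ u) x :=
    (hu.fderiv_right (m := 1) (by norm_num)).differentiableAt one_ne_zero
  change fderiv ℝ (fun y => fderiv ℝ u y (EuclideanSpace.single j 1)) x _ = _
  rw [fderiv_clm_apply hd (differentiableAt_const _)]
  simp

lemma hess_comm (hu : ContDiffAt ℝ 2 u x) (i j : Fin n) : hess u x i j = hess u x j i := by
  rw [hess_apply_eq_fderiv_fderiv hu, hess_apply_eq_fderiv_fderiv hu,
    (hu.isSymmSndFDerivAt (by simp)).eq]

lemma Amat_isHermitian (hu : ContDiffAt ℝ 2 u x) : (Amat u x).IsHermitian := by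
  ext i j
  simp [Amat, hess_comm hu j i, eq_comm]

lemma pd_add (hu : DifferentiableAt ℝ u x) (hv : DifferentiableAt ℝ v x) (j : Fin n) :
    pd (fun y => u y + v y) j x = pd u j x + pd v j x := by
  rw [pd, fderiv_fun_add hu hv]
  rfl

lemma hess_add (hu : ContDiffAt ℝ 2 u x) (hv : ContDiffAt ℝ 2 v x) (i j : Fin n) :
    hess (fun y => u y + v y) x i j = hess u x i j + hess v x i j := by
  have hpd : (fun y => pd (fun z => u z + v z) j y) =ᶠ[nhds x] fun y => pd u j y + pd v j y := by
    filter_upwards [hu.eventually (by simp), hv.eventually (by simp)] with y huy hvy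
    exact pd_add (huy.differentiableAt two_ne_zero) (hvy.differentiableAt two_ne_zero) j
  change fderiv ℝ _ x _ = _
  rw [hpd.fderiv_eq]
  exact pd_add (pd_differentiableAt hu j) (pd_differentiableAt hv j) i

lemma gradsq_add (hu : DifferentiableAt ℝ u x) (hv : DifferentiableAt ℝ v x) :
    gradsq (fun y => u y + v y) x
      = gradsq u x + 2 * ∑ i, pd u i x * pd v i x + gradsq v x := by
  simp only [gradsq, pd_add hu hv, Finset.mul_sum, ← Finset.sum_add_distrib]
  exact Finset.sum_congr rfl fun i _ => by ring

lemma Amat_add (hu : ContDiffAt ℝ 2 u x) (hv : ContDiffAt ℝ 2 v x) (hupos : 0 < u x)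
    (hvpos : 0 < v x) :
    Amat (fun y => u y + v y) x
      = ((u x + v x) / u x) • Amat u x + ((u x + v x) / v x) • Amat v x
        + ((∑ i, (v x * pd u i x - u x * pd v i x) ^ 2) / (2 * u x * v x)) • 1 := by
  have hsq : ∑ i, (v x * pd u i x - u x * pd v i x) ^ 2
      = v x ^ 2 * gradsq u x - 2 * (u x * v x) * ∑ i, pd u i x * pd v i x
        + u x ^ 2 * gradsq v x := by
    simp only [gradsq, Finset.mul_sum, ← Finset.sum_sub_distrib, ← Finset.sum_add_distrib]
    exact Finset.sum_congr rfl fun i _ => by ring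
  ext i j
  simp only [Amat, Matrix.add_apply, Matrix.smul_apply, one_apply, of_apply, smul_eq_mul,
    hess_add hu hv, gradsq_add (hu.differentiableAt two_ne_zero) (hv.differentiableAt two_ne_zero),
    hsq]
  field_simp
  split_ifs <;> ring

end Calculus

theorem stmt2_general (n k : ℕ)
    (hconv : Convex ℝ (GammaK n k))
    (Ω : Set (E n)) (hΩ : IsOpen Ω) (u v : E n → ℝ)
    (hu : ContDiffOn ℝ 2 u Ω) (hv : ContDiffOn ℝ 2 v Ω)
    (hupos : ∀ x ∈ Ω, 0 < u x) (hvpos : ∀ x ∈ Ω, 0 < v x)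
    (huG : ∀ x ∈ Ω, eigs (Amat u x) ∈ GammaK n k)
    (hvG : ∀ x ∈ Ω, eigs (Amat v x) ∈ GammaK n k) :
    ∀ x ∈ Ω, eigs (Amat (fun y => u y + v y) x) ∈ GammaK n k := by
  intro x hx
  have hux : ContDiffAt ℝ 2 u x := hu.contDiffAt (hΩ.mem_nhds hx)
  have hvx : ContDiffAt ℝ 2 v x := hv.contDiffAt (hΩ.mem_nhds hx)
  have hu0 := hupos x hx
  have hv0 := hvpos x hx
  rw [Amat_add hux hvx hu0 hv0]
  exact eigs_smul_add_smul_add_smul_one_mem_GammaK hconv (Amat_isHermitian hux)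
    (Amat_isHermitian hvx) (huG x hx) (hvG x hx) (by positivity) (by positivity) (by positivity)

theorem stmt2 (n k : ℕ) (hk : 1 ≤ k) (hkn : k ≤ n)
    (hconv : Convex ℝ (GammaK n k))
    (Ω : Set (E n)) (hΩ : IsOpen Ω) (u v : E n → ℝ)
    (hu : ContDiffOn ℝ 2 u Ω) (hv : ContDiffOn ℝ 2 v Ω)
    (hupos : ∀ x ∈ Ω, 0 < u x) (hvpos : ∀ x ∈ Ω, 0 < v x)
    (huG : ∀ x ∈ Ω, eigs (Amat u x) ∈ GammaK n k)
    (hvG : ∀ x ∈ Ω, eigs (Amat v x) ∈ GammaK n k) :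
    ∀ x ∈ Ω, eigs (Amat (fun y => u y + v y) x) ∈ GammaK n k :=
  stmt2_general n k hconv Ω hΩ u v hu hv hupos hvpos huG hvG
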